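/- Let A be a Jacobi-Jordan algebra over a field k, let α, β ∈ k be nonzero and let 0 ≠ z ∈ Z(A). Then the map R(a⊗b) = α·(b⊗a) + β·(z⊗(a·b)) is a solution of the quantum Yang-Baxter equation if and only if char(k) = 2 or 2·(c·(a·b)) = 0 for all a, b, c ∈ A (i.e., A is at most 3-step nilpotent when char(k) ≠ 2). -/

import Mathlib

/-!
Expand both sides of the QYBE on a pure tensor `(a ⊗ b) ⊗ c`. Since `z` annihilates `A`, every
term agrees except the ones in `(z ⊗ z) ⊗ A`, whose difference is
`αβ² (z ⊗ z) ⊗ ((ab)c - (ac)b - a(bc))`; commutativity and the Jacobi identity turn this into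
`αβ² (z ⊗ z) ⊗ 2c(ab)`. Over a field a tensor of nonzero vectors is nonzero, so the QYBE holds
iff `2c(ab) = 0` for all `a, b, c`, and this is automatic in characteristic `2`.
-/

open TensorProduct

namespace TensorProduct

variable {K V W : Type*} [Field K] [AddCommGroup V] [Module K V] [AddCommGroup W] [Module K W]

theorem tmul_eq_zero_iff_right {v : V} (hv : v ≠ 0) {w : W} : v ⊗ₜ[K] w = 0 ↔ w = 0 := by
  refine ⟨fun h ↦ ?_, fun hw ↦ by rw [hw, tmul_zero]⟩
  obtain ⟨f, hf⟩ := Module.Projective.exists_dual_eq_one K hv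
  simpa [hf] using congrArg (fun t ↦ TensorProduct.lid K W (f.rTensor W t)) h

end TensorProduct

section YangBaxter

variable {k A : Type*} [CommRing k] [AddCommGroup A] [Module k A]
  {m : A →ₗ[k] A →ₗ[k] A} {z : A} {α β : k} {R : A ⊗[k] A →ₗ[k] A ⊗[k] A}
  {R12 R23 : (A ⊗[k] A) ⊗[k] A →ₗ[k] (A ⊗[k] A) ⊗[k] A}

theorem R12_tmul (hR : ∀ a b : A, R (a ⊗ₜ[k] b) = α • (b ⊗ₜ[k] a) + β • (z ⊗ₜ[k] m a b))
    (hR12 : R12 = TensorProduct.map R LinearMap.id) (a b c : A) :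
    R12 ((a ⊗ₜ b) ⊗ₜ c) = α • (b ⊗ₜ a) ⊗ₜ c + β • (z ⊗ₜ m a b) ⊗ₜ c := by
  simp [hR12, hR, add_tmul, smul_tmul']

theorem R23_tmul (hR : ∀ a b : A, R (a ⊗ₜ[k] b) = α • (b ⊗ₜ[k] a) + β • (z ⊗ₜ[k] m a b))
    (hR23 : R23 = (TensorProduct.assoc k A A A).symm.toLinearMap ∘ₗ
      TensorProduct.map LinearMap.id R ∘ₗ (TensorProduct.assoc k A A A).toLinearMap)
    (a b c : A) :
    R23 ((a ⊗ₜ b) ⊗ₜ c) = α • (a ⊗ₜ c) ⊗ₜ b + β • (a ⊗ₜ z) ⊗ₜ m b c := by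
  simp [hR23, hR, tmul_add, tmul_smul]

theorem R12_R23_R12_tmul (hzl : ∀ a : A, m z a = 0) (hzr : ∀ a : A, m a z = 0)
    (hR : ∀ a b : A, R (a ⊗ₜ[k] b) = α • (b ⊗ₜ[k] a) + β • (z ⊗ₜ[k] m a b))
    (hR12 : R12 = TensorProduct.map R LinearMap.id)
    (hR23 : R23 = (TensorProduct.assoc k A A A).symm.toLinearMap ∘ₗ
      TensorProduct.map LinearMap.id R ∘ₗ (TensorProduct.assoc k A A A).toLinearMap)
    (a b c : A) :
    (R12 ∘ₗ R23 ∘ₗ R12) ((a ⊗ₜ b) ⊗ₜ c) =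
      α ^ 3 • (c ⊗ₜ b) ⊗ₜ a
      + (α ^ 2 * β) • ((z ⊗ₜ m b c) ⊗ₜ a + (z ⊗ₜ b) ⊗ₜ m a c + (c ⊗ₜ z) ⊗ₜ m a b)
      + (α * β ^ 2) • (z ⊗ₜ z) ⊗ₜ m (m a b) c := by
  simp only [LinearMap.comp_apply, R12_tmul hR hR12, R23_tmul hR hR23, map_add, map_smul,
    hzl, hzr, tmul_zero, zero_tmul, smul_zero, add_zero]
  module

theorem R23_R12_R23_tmul (hzr : ∀ a : A, m a z = 0)
    (hR : ∀ a b : A, R (a ⊗ₜ[k] b) = α • (b ⊗ₜ[k] a) + β • (z ⊗ₜ[k] m a b))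
    (hR12 : R12 = TensorProduct.map R LinearMap.id)
    (hR23 : R23 = (TensorProduct.assoc k A A A).symm.toLinearMap ∘ₗ
      TensorProduct.map LinearMap.id R ∘ₗ (TensorProduct.assoc k A A A).toLinearMap)
    (a b c : A) :
    (R23 ∘ₗ R12 ∘ₗ R23) ((a ⊗ₜ b) ⊗ₜ c) =
      α ^ 3 • (c ⊗ₜ b) ⊗ₜ a
      + (α ^ 2 * β) • ((z ⊗ₜ m b c) ⊗ₜ a + (z ⊗ₜ b) ⊗ₜ m a c + (c ⊗ₜ z) ⊗ₜ m a b)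
      + (α * β ^ 2) • (z ⊗ₜ z) ⊗ₜ (m (m a c) b + m a (m b c)) := by
  simp only [LinearMap.comp_apply, R12_tmul hR hR12, R23_tmul hR hR23, map_add, map_smul,
    hzr, tmul_zero, zero_tmul, smul_zero, add_zero, tmul_add]
  module

theorem jacobiJordan_mul_mul_sub (hcomm : ∀ a b : A, m a b = m b a)
    (hjac : ∀ a b c : A, m a (m b c) + m b (m c a) + m c (m a b) = 0) (a b c : A) :
    m (m a b) c - (m (m a c) b + m a (m b c)) = (2 : k) • m c (m a b) := by
  rw [hcomm (m a b) c, hcomm (m a c) b, hcomm a c]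
  linear_combination (norm := module) -hjac a b c

end YangBaxter

theorem stmt_1_general {k A : Type*} [Field k] [AddCommGroup A] [Module k A]
    (m : A →ₗ[k] A →ₗ[k] A)
    (hcomm : ∀ a b : A, m a b = m b a)
    (hjac : ∀ a b c : A, m a (m b c) + m b (m c a) + m c (m a b) = 0)
    (α β : k) (hα : α ≠ 0) (hβ : β ≠ 0)
    (z : A) (hz : z ≠ 0) (hzl : ∀ a : A, m z a = 0)
    (R : A ⊗[k] A →ₗ[k] A ⊗[k] A)
    (hR : ∀ a b : A, R (a ⊗ₜ[k] b) = α • (b ⊗ₜ[k] a) + β • (z ⊗ₜ[k] m a b))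
    (R12 R23 : (A ⊗[k] A) ⊗[k] A →ₗ[k] (A ⊗[k] A) ⊗[k] A)
    (hR12 : R12 = TensorProduct.map R LinearMap.id)
    (hR23 : R23 = (TensorProduct.assoc k A A A).symm.toLinearMap ∘ₗ
      TensorProduct.map LinearMap.id R ∘ₗ (TensorProduct.assoc k A A A).toLinearMap) :
    R12 ∘ₗ R23 ∘ₗ R12 = R23 ∘ₗ R12 ∘ₗ R23 ↔
      (ringChar k = 2 ∨ ∀ a b c : A, (2 : k) • m c (m a b) = 0) := by
  have hzr (a : A) : m a z = 0 := hcomm a z ▸ hzl a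
  have hzz : z ⊗ₜ[k] z ≠ 0 := fun h ↦ hz ((tmul_eq_zero_iff_right hz).1 h)
  have hαβ : α * β ^ 2 ≠ 0 := mul_ne_zero hα (pow_ne_zero 2 hβ)
  have qybe_tmul_iff (a b c : A) :
      (R12 ∘ₗ R23 ∘ₗ R12) ((a ⊗ₜ b) ⊗ₜ c) = (R23 ∘ₗ R12 ∘ₗ R23) ((a ⊗ₜ b) ⊗ₜ c) ↔
        (2 : k) • m c (m a b) = 0 := by
    rw [R12_R23_R12_tmul hzl hzr hR hR12 hR23, R23_R12_R23_tmul hzr hR hR12 hR23,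
      add_right_inj, smul_right_inj hαβ, ← sub_eq_zero, ← tmul_sub, tmul_eq_zero_iff_right hzz,
      jacobiJordan_mul_mul_sub hcomm hjac]
  have qybe_iff :
      R12 ∘ₗ R23 ∘ₗ R12 = R23 ∘ₗ R12 ∘ₗ R23 ↔ ∀ a b c : A, (2 : k) • m c (m a b) = 0 :=
    ⟨fun h a b c ↦ (qybe_tmul_iff a b c).1 (LinearMap.congr_fun h _),
      fun h ↦ ext_threefold fun a b c ↦ (qybe_tmul_iff a b c).2 (h a b c)⟩
  rw [qybe_iff]
  refine ⟨Or.inr, fun h ↦ h.elim (fun hchar a b c ↦ ?_) id⟩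
  have := ringChar.of_eq hchar
  rw [CharTwo.two_eq_zero, zero_smul]

/-- For a Jacobi-Jordan algebra `A` over a field `k`, nonzero scalars
`α, β` and `0 ≠ z` in the Leibniz center, the map
`R(a ⊗ b) = α • (b ⊗ a) + β • (z ⊗ (a·b))` is a solution of the quantum
Yang-Baxter equation iff `char k = 2` or `2 • (c·(a·b)) = 0` for all `a, b, c`. -/
theorem stmt_1 {k A : Type*} [Field k] [AddCommGroup A] [Module k A]
    (m : A →ₗ[k] A →ₗ[k] A)
    (hcomm : ∀ a b : A, m a b = m b a)
    (hjac : ∀ a b c : A, m a (m b c) + m b (m c a) + m c (m a b) = 0)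
    (α β : k) (hα : α ≠ 0) (hβ : β ≠ 0)
    (z : A) (hz : z ≠ 0) (hzl : ∀ a : A, m z a = 0) (hzr : ∀ a : A, m a z = 0)
    (R : A ⊗[k] A →ₗ[k] A ⊗[k] A)
    (hR : ∀ a b : A, R (a ⊗ₜ[k] b) = α • (b ⊗ₜ[k] a) + β • (z ⊗ₜ[k] m a b))
    (R12 R23 : (A ⊗[k] A) ⊗[k] A →ₗ[k] (A ⊗[k] A) ⊗[k] A)
    (hR12 : R12 = TensorProduct.map R LinearMap.id)
    (hR23 : R23 = (TensorProduct.assoc k A A A).symm.toLinearMap ∘ₗ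
      TensorProduct.map LinearMap.id R ∘ₗ (TensorProduct.assoc k A A A).toLinearMap) :
    R12 ∘ₗ R23 ∘ₗ R12 = R23 ∘ₗ R12 ∘ₗ R23 ↔
      (ringChar k = 2 ∨ ∀ a b c : A, (2 : k) • m c (m a b) = 0) :=
  stmt_1_general m hcomm hjac α β hα hβ z hz hzl R hR R12 R23 hR12 hR23
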